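/- arXiv:2303.02789 — 3 statements merged into one kernel-verified Lean document; each statement's English description precedes it below -/
import Mathlib

section
/- Let (L, Q) be a unimodular lattice and w ∈ L a primitive isotropic vector. The map A → Λ_w sending an even element e (lifted to ℤ{u,w}⊥ ≅ w⊥/ℤw) to the Eichler transformation E(w,e) is a group isomorphism from the subgroup A of even elements of (w⊥/ℤw, Q̄) onto Λ_w. -/
/-!
Because `Q w u = 1` and `w` is isotropic, every `x` is `k + Q w x • u + b • w` with `k ⟂ u, w`,
so a linear map is determined by its values at `u`, at `w` and on `{u, w}⊥`. Eichler
transformations compose additively in `e` because `Q e e / 2` is additive on even vectors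
orthogonal to `w`. For `f ∈ Λ_w`, let `e` be the projection of `f u - u` to `{u, w}⊥`: then `f` and
`E(w, e)` agree at `w` and at `u`, and both move `k ∈ {u, w}⊥` by the multiple of `w` forced by
`Q (f u) (f k) = Q u k = 0`.
-/

namespace Eichler

variable {L : Type*} [AddCommGroup L] (Q : L →ₗ[ℤ] L →ₗ[ℤ] ℤ)

/-- The Eichler transformation `E(w, e)`; `Q e e / 2` is integer division, exact for even `e`. -/
def eichler (w e : L) : L →ₗ[ℤ] L where
  toFun x := x + Q w x • e - Q e x • w - ((Q e e / 2) * Q w x) • w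
  map_add' x y := by simp only [map_add]; module
  map_smul' a x := by simp only [map_smul, smul_eq_mul, RingHom.id_apply]; module

variable {Q}

theorem eichler_apply (w e x : L) :
    eichler Q w e x = x + Q w x • e - Q e x • w - ((Q e e / 2) * Q w x) • w :=
  rfl

theorem eichler_zero (w : L) : eichler Q w 0 = LinearMap.id := by
  ext x
  simp [eichler_apply]

theorem eichler_self {w e : L} (hw : Q w w = 0) (hew : Q e w = 0) : eichler Q w e w = w := by
  simp [eichler_apply, hw, hew]

theorem eichler_sub_self_of_orthogonal (w e : L) {x : L} (hx : Q w x = 0) :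
    eichler Q w e x - x = (-Q e x) • w := by
  simp only [eichler_apply, hx, zero_smul, mul_zero, add_zero, neg_smul]
  abel

theorem eichler_eichler (hQ : ∀ x y, Q x y = Q y x) {w e₁ e₂ : L} (hw : Q w w = 0)
    (hw₁ : Q e₁ w = 0) (he₁ : Even (Q e₁ e₁)) (hw₂ : Q e₂ w = 0) (he₂ : Even (Q e₂ e₂))
    (x : L) : eichler Q w e₁ (eichler Q w e₂ x) = eichler Q w (e₁ + e₂) x := by
  obtain ⟨c₁, hc₁⟩ := he₁
  obtain ⟨c₂, hc₂⟩ := he₂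
  have hsum : Q (e₁ + e₂) (e₁ + e₂) / 2 = c₁ + c₂ + Q e₁ e₂ := by
    have : Q (e₁ + e₂) (e₁ + e₂) = Q e₁ e₁ + 2 * Q e₁ e₂ + Q e₂ e₂ := by
      simp only [map_add, LinearMap.add_apply, hQ e₂ e₁]; ring
    omega
  have hd₁ : Q e₁ e₁ / 2 = c₁ := by omega
  have hd₂ : Q e₂ e₂ / 2 = c₂ := by omega
  simp only [eichler_apply]
  rw [hsum, hd₁, hd₂]
  simp only [map_add, map_sub, map_smul, LinearMap.add_apply, smul_eq_mul, hQ w e₂, hw₁, hw₂, hw,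
    mul_zero, add_zero, sub_zero]
  module

theorem eichler_bijective (hQ : ∀ x y, Q x y = Q y x) {w e : L} (hw : Q w w = 0)
    (hew : Q e w = 0) (he : Even (Q e e)) : Function.Bijective (eichler Q w e) := by
  have hnew : Q (-e) w = 0 := by simp [hew]
  have hne : Even (Q (-e) (-e)) := by simpa using he
  refine Function.bijective_iff_has_inverse.mpr ⟨eichler Q w (-e), fun x => ?_, fun x => ?_⟩
  · rw [eichler_eichler hQ hw hnew hne hew he, neg_add_cancel, eichler_zero, LinearMap.id_apply]
  · rw [eichler_eichler hQ hw hew he hnew hne, add_neg_cancel, eichler_zero, LinearMap.id_apply]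

theorem eichler_isometry (hQ : ∀ x y, Q x y = Q y x) {w e : L} (hw : Q w w = 0)
    (hew : Q e w = 0) (he : Even (Q e e)) (x y : L) :
    Q (eichler Q w e x) (eichler Q w e y) = Q x y := by
  obtain ⟨c, hc⟩ := he
  have hd : Q e e / 2 = c := by omega
  simp only [eichler_apply]
  rw [hd]
  simp only [map_add, map_sub, map_smul, LinearMap.add_apply, LinearMap.sub_apply,
    LinearMap.smul_apply, smul_eq_mul, hQ x e, hQ x w, hQ w e, hew, hw, hc]
  ring

/-- `E(w, e) u - u = e - (Q e e / 2) • w` recovers `e` once its `w`-coefficient is read off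
by pairing with `u`. -/
theorem eichler_injective {w u e₁ e₂ : L} (hu : Q w u = 1) (hu₁ : Q e₁ u = 0)
    (hu₂ : Q e₂ u = 0) (h : eichler Q w e₁ = eichler Q w e₂) : e₁ = e₂ := by
  have hat_u := LinearMap.congr_fun h u
  simp only [eichler_apply, hu, one_smul, hu₁, hu₂, zero_smul, sub_zero, mul_one,
    add_sub_assoc, add_right_inj] at hat_u
  have hcoef : Q e₁ e₁ / 2 = Q e₂ e₂ / 2 := by
    have := congrArg (fun z => Q z u) hat_u
    simpa [hu, hu₁, hu₂] using this
  rwa [hcoef, sub_left_inj] at hat_u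

theorem linearMap_ext_of_hyperbolic_pair (hQ : ∀ x y, Q x y = Q y x) {w u : L}
    (hw : Q w w = 0) (hu : Q w u = 1) {M : Type*} [AddCommGroup M] {g h : L →ₗ[ℤ] M}
    (hgu : g u = h u) (hgw : g w = h w) (hk : ∀ k, Q w k = 0 → Q u k = 0 → g k = h k) :
    g = h := by
  ext x
  set b : ℤ := Q u x - Q w x * Q u u
  set k : L := x - Q w x • u - b • w with hk_def
  have hwk : Q w k = 0 := by
    simp only [hk_def, map_sub, map_smul, smul_eq_mul, hu, hw]
    ring
  have huk : Q u k = 0 := by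
    simp only [hk_def, map_sub, map_smul, smul_eq_mul, hQ u w, hu, b]
    ring
  have hx : x = k + Q w x • u + b • w := by
    rw [hk_def]; abel
  rw [hx, map_add, map_add, map_add, map_add, map_smul, map_smul, map_smul, map_smul,
    hk k hwk huk, hgu, hgw]

theorem exists_eq_eichler (hQ : ∀ x y, Q x y = Q y x) {w u : L} (hw : Q w w = 0)
    (hu : Q w u = 1) (f : L →ₗ[ℤ] L) (hf : ∀ x y, Q (f x) (f y) = Q x y) (hfw : f w = w)
    (hfk : ∀ x, Q w x = 0 → ∃ m : ℤ, f x - x = m • w) :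
    ∃ e, Q e u = 0 ∧ Q e w = 0 ∧ Even (Q e e) ∧ f = eichler Q w e := by
  set v : L := f u - u with hv
  set e : L := v - Q u v • w with he
  have hwfu : Q w (f u) = 1 := by rw [← hfw, hf, hu]
  have hwv : Q w v = 0 := by simp [hv, hwfu, hu]
  have heu : Q e u = 0 := by
    simp only [he, map_sub, map_smul, LinearMap.sub_apply, LinearMap.smul_apply, smul_eq_mul,
      hu, mul_one, hQ v u, sub_self]
  have hew : Q e w = 0 := by
    simp only [he, map_sub, map_smul, LinearMap.sub_apply, LinearMap.smul_apply, smul_eq_mul,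
      hw, mul_zero, sub_zero, hQ v w, hwv]
  have hee : Q e e = -Q u v + -Q u v := by
    have hvv : Q v v = -Q u v + -Q u v := by
      simp only [hv, map_sub, LinearMap.sub_apply, hf, hQ (f u) u]
      ring
    simp only [he, map_sub, map_smul, LinearMap.sub_apply, LinearMap.smul_apply, smul_eq_mul,
      hw, hwv, hQ v w, mul_zero, sub_zero, hvv]
  refine ⟨e, heu, hew, ⟨-Q u v, hee⟩, ?_⟩
  refine linearMap_ext_of_hyperbolic_pair hQ hw hu ?_ (by rw [hfw, eichler_self hw hew]) ?_
  · have hd : Q e e / 2 = -Q u v := by omega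
    rw [eichler_apply, hu, heu, hd, he]
    module
  · intro k hwk huk
    obtain ⟨m, hm⟩ := hfk k hwk
    have hfk' : f k = k + m • w := by rw [← hm]; abel
    have hek : Q e k = -m := by
      have h := hf u k
      rw [hfk', huk] at h
      have hfuw : Q (f u) w = 1 := by rw [hQ, hwfu]
      simp only [map_add, map_smul, smul_eq_mul, hfuw, mul_one] at h
      simp only [he, hv, map_sub, map_smul, LinearMap.sub_apply, LinearMap.smul_apply,
        smul_eq_mul, huk, hwk]
      omega
    rw [hfk', eq_comm, ← sub_eq_iff_eq_add', eichler_sub_self_of_orthogonal w e hwk, hek, neg_neg]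

end Eichler

open Eichler in
theorem stmt_5_general {L : Type*} [AddCommGroup L]
    (Q : L →ₗ[ℤ] L →ₗ[ℤ] ℤ)
    (hsymm : ∀ x y, Q x y = Q y x)
    (w : L) (hwiso : Q w w = 0)
    (u : L) (hu : Q w u = 1) :
    let E : L → L → L := fun e x =>
      x + Q w x • e - Q e x • w - ((Q e e / 2) * Q w x) • w
    -- E(w,e) lands in Λ_w
    (∀ e, Q e u = 0 → Q e w = 0 → Even (Q e e) →
      (∀ x y, E e (x + y) = E e x + E e y) ∧
      Function.Bijective (E e) ∧
      (∀ x y, Q (E e x) (E e y) = Q x y) ∧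
      E e w = w ∧
      (∀ x, Q w x = 0 → ∃ m : ℤ, E e x - x = m • w)) ∧
    -- homomorphism
    (∀ e₁ e₂, Q e₁ u = 0 → Q e₁ w = 0 → Even (Q e₁ e₁) →
      Q e₂ u = 0 → Q e₂ w = 0 → Even (Q e₂ e₂) →
      ∀ x, E e₁ (E e₂ x) = E (e₁ + e₂) x) ∧
    -- injective
    (∀ e₁ e₂, Q e₁ u = 0 → Q e₁ w = 0 → Q e₂ u = 0 → Q e₂ w = 0 →
      (∀ x, E e₁ x = E e₂ x) → e₁ = e₂) ∧
    -- surjective onto Λ_w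
    (∀ f : L ≃ₗ[ℤ] L, (∀ x y, Q (f x) (f y) = Q x y) → f w = w →
      (∀ x, Q w x = 0 → ∃ m : ℤ, f x - x = m • w) →
      ∃ e, Q e u = 0 ∧ Q e w = 0 ∧ Even (Q e e) ∧ ∀ x, f x = E e x) := by
  intro E
  have hE : ∀ e, E e = eichler Q w e := fun _ => rfl
  simp only [hE]
  refine ⟨fun e _ hew he => ⟨map_add _, eichler_bijective hsymm hwiso hew he,
      eichler_isometry hsymm hwiso hew he, eichler_self hwiso hew,
      fun x hx => ⟨_, eichler_sub_self_of_orthogonal w e hx⟩⟩,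
    fun e₁ e₂ _ hw₁ he₁ _ hw₂ he₂ => eichler_eichler hsymm hwiso hw₁ he₁ hw₂ he₂,
    fun e₁ e₂ hu₁ _ hu₂ _ h => eichler_injective hu hu₁ hu₂ (LinearMap.ext h),
    fun f hf hfw hfk => ?_⟩
  obtain ⟨e, heu, hew, he, hfe⟩ := exists_eq_eichler hsymm hwiso hu f.toLinearMap hf hfw hfk
  exact ⟨e, heu, hew, he, LinearMap.congr_fun hfe⟩

/-- The map `e ↦ E(w,e)`, from the group `A` of even vectors in
`ℤ{u,w}⊥ ≅ w⊥/ℤw` to `Λ_w`, is a group isomorphism: each `E(w,e)` is an isometry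
fixing `w` and acting trivially on `w⊥/ℤw`, the assignment is a homomorphism,
injective, and every element of `Λ_w` arises this way. -/
theorem stmt_5 {L : Type*} [AddCommGroup L] [Module.Free ℤ L] [Module.Finite ℤ L]
    (Q : L →ₗ[ℤ] L →ₗ[ℤ] ℤ)
    (hsymm : ∀ x y, Q x y = Q y x)
    (hunimod : ∀ φ : L →ₗ[ℤ] ℤ, ∃! y : L, ∀ x, Q y x = φ x)
    (w : L) (hwiso : Q w w = 0)
    (hprim : ∀ (a : ℤ) (x : L), a • x = w → IsUnit a)
    (u : L) (hu : Q w u = 1) :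
    let E : L → L → L := fun e x =>
      x + Q w x • e - Q e x • w - ((Q e e / 2) * Q w x) • w
    -- E(w,e) lands in Λ_w
    (∀ e, Q e u = 0 → Q e w = 0 → Even (Q e e) →
      (∀ x y, E e (x + y) = E e x + E e y) ∧
      Function.Bijective (E e) ∧
      (∀ x y, Q (E e x) (E e y) = Q x y) ∧
      E e w = w ∧
      (∀ x, Q w x = 0 → ∃ m : ℤ, E e x - x = m • w)) ∧
    -- homomorphism
    (∀ e₁ e₂, Q e₁ u = 0 → Q e₁ w = 0 → Even (Q e₁ e₁) →
      Q e₂ u = 0 → Q e₂ w = 0 → Even (Q e₂ e₂) →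
      ∀ x, E e₁ (E e₂ x) = E (e₁ + e₂) x) ∧
    -- injective
    (∀ e₁ e₂, Q e₁ u = 0 → Q e₁ w = 0 → Q e₂ u = 0 → Q e₂ w = 0 →
      (∀ x, E e₁ x = E e₂ x) → e₁ = e₂) ∧
    -- surjective onto Λ_w
    (∀ f : L ≃ₗ[ℤ] L, (∀ x y, Q (f x) (f y) = Q x y) → f w = w →
      (∀ x, Q w x = 0 → ∃ m : ℤ, f x - x = m • w) →
      ∃ e, Q e u = 0 ∧ Q e w = 0 ∧ Even (Q e e) ∧ ∀ x, f x = E e x) :=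
  stmt_5_general Q hsymm w hwiso u hu
end

section
/- Let Q_N be the standard symmetric bilinear form of signature (1,N) on ℤ^{N+1}, i.e. Q_N(x,y) = x₀y₀ − x₁y₁ − ⋯ − x_N y_N, with N ≥ 2. Let f ∈ O(Q_N)(ℤ) fix a primitive isotropic vector w. If f fixes an isotropic vector w₀ ∈ ℝ^{N+1} up to scalar (f(w₀) = λw₀) with Q_N(w, w₀) ≠ 0, then λ = 1 and f fixes a vector of positive self-intersection, namely aw + w₀ where a = Q_N(w, w₀), which satisfies Q_N(aw+w₀, aw+w₀) = 2a² > 0. -/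
/-- The standard bilinear form of signature `(1, N)` on `ℝ^{N+1}`. -/
def QR (N : ℕ) (x y : Fin (N + 1) → ℝ) : ℝ :=
  x 0 * y 0 - ∑ i : Fin N, x i.succ * y i.succ

lemma QR_smul_right (N : ℕ) (c : ℝ) (x y : Fin (N + 1) → ℝ) :
    QR N x (c • y) = c * QR N x y := by
  simp [QR, mul_sub, Finset.mul_sum]; ring_nf

lemma QR_add (N : ℕ) (x y z t : Fin (N + 1) → ℝ) :
    QR N (x + y) (z + t) = QR N x z + QR N x t + QR N y z + QR N y t := by
  simp [QR, add_mul, mul_add, Finset.sum_add_distrib]; ring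

lemma QR_smul_left (N : ℕ) (c : ℝ) (x y : Fin (N + 1) → ℝ) :
    QR N (c • x) y = c * QR N x y := by
  simp [QR, mul_sub, Finset.mul_sum]; ring_nf

lemma QR_symm (N : ℕ) (x y : Fin (N + 1) → ℝ) : QR N x y = QR N y x := by
  simp [QR, mul_comm]

/-- If `f ∈ O(Q_N)(ℤ)` fixes a primitive isotropic vector `w` and also
fixes an isotropic vector `w₀ ∈ ℝ^{N+1}` up to scalar `λ`, with `a := Q_N(w, w₀) ≠ 0`,
then `λ = 1` and `f` fixes `a·w + w₀`, which has `Q_N(aw+w₀, aw+w₀) = 2a² > 0`. -/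
theorem stmt_7 (N : ℕ) (hN : 2 ≤ N)
    (f : (Fin (N + 1) → ℝ) ≃ₗ[ℝ] (Fin (N + 1) → ℝ))
    (hfQ : ∀ x y, QR N (f x) (f y) = QR N x y)
    (hlat : ∀ x : Fin (N + 1) → ℤ, ∃ y : Fin (N + 1) → ℤ,
      f (fun i => (x i : ℝ)) = fun i => (y i : ℝ))
    (hlat' : ∀ x : Fin (N + 1) → ℤ, ∃ y : Fin (N + 1) → ℤ,
      f.symm (fun i => (x i : ℝ)) = fun i => (y i : ℝ))
    (w : Fin (N + 1) → ℤ)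
    (hprim : ∀ d : ℤ, (∀ i, d ∣ w i) → IsUnit d)
    (wR : Fin (N + 1) → ℝ) (hwR : wR = fun i => (w i : ℝ))
    (hwiso : QR N wR wR = 0) (hfw : f wR = wR)
    (w₀ : Fin (N + 1) → ℝ) (hw₀ : QR N w₀ w₀ = 0)
    (lam : ℝ) (hflam : f w₀ = lam • w₀)
    (a : ℝ) (haQ : a = QR N wR w₀) (ha : a ≠ 0) :
    lam = 1 ∧
    f (a • wR + w₀) = a • wR + w₀ ∧
    QR N (a • wR + w₀) (a • wR + w₀) = 2 * a ^ 2 ∧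
    0 < 2 * a ^ 2 := by
  have hla : lam * a = a := by
    have := hfQ wR w₀
    rw [hfw, hflam, QR_smul_right, ← haQ] at this
    linarith
  have hlam : lam = 1 := by
    have : (lam - 1) * a = 0 := by ring_nf; linarith
    rcases mul_eq_zero.mp this with h | h
    · linarith
    · exact absurd h ha
  refine ⟨hlam, ?_, ?_, by positivity⟩
  · rw [map_add, map_smul, hfw, hflam, hlam, one_smul]
  · rw [QR_add, QR_smul_left, QR_smul_left, QR_smul_right, QR_smul_right,
      hwiso, hw₀, ← haQ, QR_symm N w₀ wR, ← haQ]
    ring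
end

section
/- In the lattice (H₂(M_N;ℤ), Q) ≅ ⟨1⟩ ⊕ N⟨−1⟩ with N = n+1 ≥ 2, equipped with the basis {s, v, e₁, …, e_n} where Q(s,v) = 1, Q(s,s) = Q(v,v) = 0, Q(eᵢ,eⱼ) = −δᵢⱼ, and {s,v,e₁,...,e_n} pairwise orthogonal except Q(s,v)=1: for each 1 ≤ k ≤ n−1, the composition f_k := Ref_{e_k} ∘ Ref_{e_{k+1}} ∘ Ref_{v−e_k−e_{k+1}} ∘ Ref_{e_k−e_{k+1}} equals the Eichler transformation E(v, e_k + e_{k+1}). -/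
/-- The form on `ℤ^{n+2}` in the hyperbolic-pair basis `{s, v, e₁, …, e_n}`:
coordinates `0 ↔ s`, `1 ↔ v`, `k+2 ↔ e_{k+1}`; `Q(s,v)=1`, `Q(s,s)=Q(v,v)=0`,
`Q(eᵢ,eⱼ)=−δᵢⱼ` and `s, v` orthogonal to the `eᵢ`. -/
def Qh (n : ℕ) (x y : Fin (n + 2) → ℤ) : ℤ :=
  x 0 * y 1 + x 1 * y 0 - ∑ i : Fin (n + 2), (if 2 ≤ (i : ℕ) then x i * y i else 0)

/-- The class `v`. -/
def vbase (n : ℕ) : Fin (n + 2) → ℤ := Pi.single 1 1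

/-- The class `e_{k+1}` (0-indexed `k`). -/
def ebase (n : ℕ) (k : Fin n) : Fin (n + 2) → ℤ := Pi.single k.succ.succ 1

/-- Reflection `Ref_u(x) = x − (2Q(x,u)/Q(u,u))·u`. -/
def Refl (n : ℕ) (u x : Fin (n + 2) → ℤ) : Fin (n + 2) → ℤ :=
  x - ((2 * Qh n x u) / Qh n u u) • u

/-- Eichler transformation `E(w,e)`. -/
def Eich (n : ℕ) (w e x : Fin (n + 2) → ℤ) : Fin (n + 2) → ℤ :=
  x + Qh n w x • e - Qh n e x • w - ((Qh n e e / 2) * Qh n w x) • w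

lemma Qh_sub_right (n : ℕ) (x y z : Fin (n + 2) → ℤ) :
    Qh n x (y - z) = Qh n x y - Qh n x z := by
  simp only [Qh, Pi.sub_apply]
  rw [Finset.sum_congr rfl (fun (i : Fin (n+2)) _ =>
    show (if 2 ≤ (i:ℕ) then x i * (y i - z i) else 0)
      = (if 2 ≤ (i:ℕ) then x i * y i else 0) - (if 2 ≤ (i:ℕ) then x i * z i else 0)
    from by split_ifs <;> ring), Finset.sum_sub_distrib]
  ring

lemma Qh_add_right (n : ℕ) (x y z : Fin (n + 2) → ℤ) :
    Qh n x (y + z) = Qh n x y + Qh n x z := by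
  simp only [Qh, Pi.add_apply]
  rw [Finset.sum_congr rfl (fun (i : Fin (n+2)) _ =>
    show (if 2 ≤ (i:ℕ) then x i * (y i + z i) else 0)
      = (if 2 ≤ (i:ℕ) then x i * y i else 0) + (if 2 ≤ (i:ℕ) then x i * z i else 0)
    from by split_ifs <;> ring), Finset.sum_add_distrib]
  ring

lemma Qh_comm (n : ℕ) (x y : Fin (n + 2) → ℤ) : Qh n x y = Qh n y x := by
  simp only [Qh]
  rw [Finset.sum_congr rfl (fun (i : Fin (n+2)) _ =>
    show (if 2 ≤ (i:ℕ) then x i * y i else 0) = (if 2 ≤ (i:ℕ) then y i * x i else 0)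
    from by split_ifs <;> ring)]
  ring

lemma Qh_x_v (n : ℕ) (x : Fin (n + 2) → ℤ) : Qh n x (vbase n) = x 0 := by
  simp only [Qh, vbase]
  rw [Finset.sum_eq_zero, Pi.single_eq_same,
    Pi.single_eq_of_ne (by simp [Fin.ext_iff] : (0 : Fin (n+2)) ≠ 1)]
  · ring
  · intro i _
    rcases eq_or_ne i 1 with h | h
    · subst h; simp
    · simp [Pi.single_eq_of_ne h]

lemma Qh_x_e (n : ℕ) (x : Fin (n + 2) → ℤ) (k : Fin n) :
    Qh n x (ebase n k) = -(x k.succ.succ) := by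
  have h2 : 2 ≤ ((k.succ.succ : Fin (n+2)) : ℕ) := by simp [Fin.val_succ]
  simp only [Qh, ebase]
  rw [Finset.sum_eq_single k.succ.succ,
    Pi.single_eq_of_ne (by simp only [ne_eq, Fin.ext_iff, Fin.val_succ, Fin.val_one]; omega
      : (1 : Fin (n+2)) ≠ k.succ.succ),
    Pi.single_eq_of_ne (by simp only [ne_eq, Fin.ext_iff, Fin.val_succ, Fin.val_zero]; omega
      : (0 : Fin (n+2)) ≠ k.succ.succ)]
  · rw [if_pos h2, Pi.single_eq_same]; ring
  · intro i _ hi; simp [Pi.single_eq_of_ne hi]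
  · simp


/-- `f_k = Ref_{e_k} ∘ Ref_{e_{k+1}} ∘ Ref_{v−e_k−e_{k+1}} ∘
Ref_{e_k−e_{k+1}}` equals the Eichler transformation `E(v, e_k + e_{k+1})`. -/
theorem stmt_13 (n : ℕ) (k k' : Fin n) (hk : (k' : ℕ) = (k : ℕ) + 1)
    (x : Fin (n + 2) → ℤ) :
    Refl n (ebase n k) (Refl n (ebase n k')
      (Refl n (vbase n - ebase n k - ebase n k')
        (Refl n (ebase n k - ebase n k') x))) =
    Eich n (vbase n) (ebase n k + ebase n k') x := by
  have hab : (k.succ.succ : Fin (n+2)) ≠ k'.succ.succ := by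
    simp only [ne_eq, Fin.ext_iff, Fin.val_succ]; omega
  have hba : (k'.succ.succ : Fin (n+2)) ≠ k.succ.succ := hab.symm
  have h01 : (0 : Fin (n+2)) ≠ 1 := by
    simp only [ne_eq, Fin.ext_iff, Fin.val_zero, Fin.val_one]; omega
  have h0a : (0 : Fin (n+2)) ≠ k.succ.succ := by
    simp only [ne_eq, Fin.ext_iff, Fin.val_zero, Fin.val_succ]; omega
  have h0b : (0 : Fin (n+2)) ≠ k'.succ.succ := by
    simp only [ne_eq, Fin.ext_iff, Fin.val_zero, Fin.val_succ]; omega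
  have h1a : (1 : Fin (n+2)) ≠ k.succ.succ := by
    simp only [ne_eq, Fin.ext_iff, Fin.val_one, Fin.val_succ]; omega
  have h1b : (1 : Fin (n+2)) ≠ k'.succ.succ := by
    simp only [ne_eq, Fin.ext_iff, Fin.val_one, Fin.val_succ]; omega
  have ha1 : (k.succ.succ : Fin (n+2)) ≠ 1 := h1a.symm
  have hb1 : (k'.succ.succ : Fin (n+2)) ≠ 1 := h1b.symm
  -- generic reflection formulas
  have hL2 : ∀ y : Fin (n+2) → ℤ, Refl n (ebase n k - ebase n k') y
      = y + (y k'.succ.succ - y k.succ.succ) • (ebase n k - ebase n k') := by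
    intro y
    have hxu : Qh n y (ebase n k - ebase n k') = y k'.succ.succ - y k.succ.succ := by
      rw [Qh_sub_right, Qh_x_e, Qh_x_e]; ring
    have huu : Qh n (ebase n k - ebase n k') (ebase n k - ebase n k') = -2 := by
      rw [Qh_sub_right, Qh_x_e, Qh_x_e]
      simp [ebase, Pi.sub_apply, Pi.single_eq_same, Pi.single_eq_of_ne hab,
        Pi.single_eq_of_ne hba]
    have hdiv : 2 * (y k'.succ.succ - y k.succ.succ) / (-2)
        = -(y k'.succ.succ - y k.succ.succ) := by omega
    unfold Refl
    rw [hxu, huu, hdiv]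
    module
  have hL3 : ∀ y : Fin (n+2) → ℤ, Refl n (vbase n - ebase n k - ebase n k') y
      = y + (y 0 + y k.succ.succ + y k'.succ.succ) •
          (vbase n - ebase n k - ebase n k') := by
    intro y
    have hxu : Qh n y (vbase n - ebase n k - ebase n k')
        = y 0 + y k.succ.succ + y k'.succ.succ := by
      rw [Qh_sub_right, Qh_sub_right, Qh_x_v, Qh_x_e, Qh_x_e]; ring
    have huu : Qh n (vbase n - ebase n k - ebase n k')
        (vbase n - ebase n k - ebase n k') = -2 := by
      rw [Qh_sub_right, Qh_sub_right, Qh_x_v, Qh_x_e, Qh_x_e]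
      simp [vbase, ebase, Pi.sub_apply, Pi.single_apply, h01.symm, h0a.symm, h0b.symm,
        ha1, hb1, hab, hba]
    have hdiv : 2 * (y 0 + y k.succ.succ + y k'.succ.succ) / (-2)
        = -(y 0 + y k.succ.succ + y k'.succ.succ) := by omega
    unfold Refl
    rw [hxu, huu, hdiv]
    module
  have hL1 : ∀ (j : Fin n) (y : Fin (n+2) → ℤ), Refl n (ebase n j) y
      = y - (2 * y j.succ.succ) • ebase n j := by
    intro j y
    have hxu : Qh n y (ebase n j) = -(y j.succ.succ) := Qh_x_e n y j
    have huu : Qh n (ebase n j) (ebase n j) = -1 := by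
      rw [Qh_x_e]; simp [ebase, Pi.single_eq_same]
    have hdiv : 2 * -(y j.succ.succ) / (-1) = 2 * y j.succ.succ := by omega
    unfold Refl
    rw [hxu, huu, hdiv]
  have hQvx : Qh n (vbase n) x = x 0 := by rw [Qh_comm, Qh_x_v]
  have hQex : Qh n (ebase n k + ebase n k') x
      = -(x k.succ.succ) + -(x k'.succ.succ) := by
    rw [Qh_comm, Qh_add_right, Qh_x_e, Qh_x_e]
  have hQee : Qh n (ebase n k + ebase n k') (ebase n k + ebase n k') = -2 := by
    rw [Qh_add_right, Qh_x_e, Qh_x_e]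
    simp [ebase, Pi.add_apply, Pi.single_eq_same, Pi.single_eq_of_ne hab,
      Pi.single_eq_of_ne hba]
  rw [hL2, hL3, hL1 k', hL1 k]
  unfold Eich
  rw [hQvx, hQex, hQee, show (-2:ℤ)/2 = -1 from by norm_num]
  simp only [Pi.add_apply, Pi.sub_apply, Pi.smul_apply, smul_eq_mul, vbase, ebase,
    Pi.single_apply, if_neg h01, if_neg h0a, if_neg h0b, if_neg ha1,
    if_neg hb1, if_neg hab, if_neg hba, if_neg h1a, if_neg h1b,
    eq_self_iff_true, if_true]
  module
end
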